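/- Let 𝐫 = ((r_1,s_1),…,(r_v,s_v)) and 𝐭 = ((t_1,u_1),…,(t_w,u_w)) be vectors of pairs of integers with all s_i, u_j ≠ 0 and all the ratios α_i := r_i/s_i and β_j := t_j/u_j not in ℤ_{≤0}. Let b ∈ {1, …, d_{𝐫,𝐭}} be coprime to d_{𝐫,𝐭} and let a ∈ {1, …, d_{𝐫,𝐭}} be the unique integer with a·b ≡ 1 (mod d_{𝐫,𝐭}). Then for every real number x, Ξ_{𝐫,𝐭}(b, x) = ξ_{𝛂,𝛃}(a, x), where ξ_{𝛂,𝛃}(a, x) := #{i ∈ {1,…,v} : a·α_i ⪯ x} − #{j ∈ {1,…,w} : a·β_j ⪯ x} is the Christol step function. -/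

import Mathlib

open Polynomial
open scoped Classical

noncomputable section

/-- The generalized Dwork map `D_b(α)`: the unique rational whose reduced denominator is
coprime to `b` and such that `b·D_b(α) − α ∈ {0, 1, …, b−1}`. -/
def dwork (b : ℕ) (α : ℚ) : ℚ :=
  if h : ∃ θ : ℚ, Nat.Coprime θ.den b ∧ ∃ k : ℤ, 0 ≤ k ∧ k < (b : ℤ) ∧ (b : ℚ) * θ - α = (k : ℚ)
  then h.choose else 0

/-- `α ∈ ℤ_{≤0}`. -/
def IsNonPosInt (α : ℚ) : Prop := ∃ m : ℤ, m ≤ 0 ∧ α = (m : ℚ)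

/-- `α ∈ ℤ_{>0}`. -/
def IsPosInt (α : ℚ) : Prop := ∃ m : ℤ, 0 < m ∧ α = (m : ℚ)

/-- `𝔫_α`. -/
def frakn (α : ℚ) : ℤ := if 0 ≤ α then α.num else |α.num| + 1

/-- `⟨x⟩`: the fractional part of `x` if `x ∉ ℤ`, and `1` if `x ∈ ℤ`. -/
def cangle (x : ℝ) : ℝ := if ∃ m : ℤ, x = (m : ℝ) then 1 else Int.fract x

/-- Christol order `x ⪯ y`. -/
def cle (x y : ℝ) : Prop := cangle x < cangle y ∨ (cangle x = cangle y ∧ y ≤ x)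

/-- The step function `δ_b(r, s, ·)`. -/
def qdelta (b : ℕ) (r s : ℤ) (x : ℝ) : ℤ :=
  if Int.gcd (s / (Nat.gcd (Int.gcd r s) b : ℤ)) (((b / Nat.gcd (Int.gcd r s) b : ℕ)) : ℤ) = 1 then
    ⌊(Nat.gcd (Int.gcd r s) b : ℝ) * x
        - ((dwork (b / Nat.gcd (Int.gcd r s) b) ((r : ℚ) / (s : ℚ)) : ℚ) : ℝ)
        - ((⌊1 - (r : ℚ) / (s : ℚ)⌋ : ℤ) : ℝ) / ((b / Nat.gcd (Int.gcd r s) b : ℕ) : ℝ)⌋ + 1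
  else 0

/-- The Landau-type step function `Δ_b^{𝐫,𝐭}`. -/
def qDeltaFn {v w : ℕ} (b : ℕ) (rr : Fin v → ℤ × ℤ) (tt : Fin w → ℤ × ℤ) (x : ℝ) : ℤ :=
  (∑ i, qdelta b (rr i).1 (rr i).2 x) - (∑ j, qdelta b (tt j).1 (tt j).2 x)

/-- The q-Pochhammer symbol `(q^r; q^s)_n` for `n ∈ ℕ`, inside `ℚ(q)`. -/
def qPoch (r s : ℤ) (n : ℕ) : RatFunc ℚ :=
  ∏ i ∈ Finset.range n, (1 - RatFunc.X ^ (r + s * (i : ℤ)))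

/-- The q-Pochhammer symbol `(q^r; q^s)_n` for `n ∈ ℤ`. -/
def qPochZ (r s : ℤ) (n : ℤ) : RatFunc ℚ :=
  if 0 ≤ n then qPoch r s n.toNat else (qPoch (r - s) (-s) (-n).toNat)⁻¹

/-- Multiplicity of `p` in `g`: the largest `k` with `p^k ∣ g`. -/
def polyMult (p g : Polynomial ℚ) : ℕ := sSup {k : ℕ | p ^ k ∣ g}

/-- The valuation `v_{φ_b}` on `ℚ(q)` attached to the `b`-th cyclotomic polynomial. -/
def cycVal (b : ℕ) (f : RatFunc ℚ) : ℤ :=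
  (polyMult (cyclotomic b ℚ) f.num : ℤ) - (polyMult (cyclotomic b ℚ) f.denom : ℤ)

/-- The image of an integer polynomial in `ℚ(q)`. -/
def polyZ (g : Polynomial ℤ) : RatFunc ℚ :=
  algebraMap (Polynomial ℚ) (RatFunc ℚ) (g.map (Int.castRingHom ℚ))

/-- `f ∈ ℤ[q⁻¹, q]`. -/
def IsIntLaurent (f : RatFunc ℚ) : Prop :=
  ∃ (m : ℕ) (g : Polynomial ℤ), f * RatFunc.X ^ m = polyZ g

/-- `f ∈ ℤ[q]`. -/
def IsIntPoly (f : RatFunc ℚ) : Prop := ∃ g : Polynomial ℤ, f = polyZ g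

/-- The ratio attached to a pair of integers. -/
def ratOf (p : ℤ × ℤ) : ℚ := (p.1 : ℚ) / (p.2 : ℚ)

/-- The q-hypergeometric term `Q_{𝐫,𝐭}(q; n)`, `n ∈ ℕ`. -/
def qHyp {v w : ℕ} (rr : Fin v → ℤ × ℤ) (tt : Fin w → ℤ × ℤ) (n : ℕ) : RatFunc ℚ :=
  (∏ i, qPoch (rr i).1 (rr i).2 n) / (∏ j, qPoch (tt j).1 (tt j).2 n)

/-- The q-hypergeometric term `Q_{𝐫,𝐭}(q; n)`, `n ∈ ℤ`. -/
def qHypZ {v w : ℕ} (rr : Fin v → ℤ × ℤ) (tt : Fin w → ℤ × ℤ) (n : ℤ) : RatFunc ℚ :=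
  (∏ i, qPochZ (rr i).1 (rr i).2 n) / (∏ j, qPochZ (tt j).1 (tt j).2 n)

/-- `c := gcd(r, s, b)`. -/
def cOf (p : ℤ × ℤ) (b : ℕ) : ℕ := Nat.gcd (Int.gcd p.1 p.2) b

/-- Membership in `V_b` (resp. `W_b`): `gcd(s, b) = gcd(r, s, b)`. -/
def inV (p : ℤ × ℤ) (b : ℕ) : Prop := Nat.gcd p.2.natAbs b = cOf p b

/-- `d_{𝐫,𝐭}`: the lcm of all the `s_i` and `u_j`. -/
def dRT {v w : ℕ} (rr : Fin v → ℤ × ℤ) (tt : Fin w → ℤ × ℤ) : ℕ :=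
  Nat.lcm (Finset.univ.lcm fun i => ((rr i).2).natAbs)
    (Finset.univ.lcm fun j => ((tt j).2).natAbs)

/-- `b̃`: the greatest divisor of `b` coprime to `d`. -/
def btilde (d b : ℕ) : ℕ := Nat.findGreatest (fun k => k ∣ b ∧ Nat.Coprime k d) b

/-- The unique `a ∈ {1,…,d}` with `a·b̃ ≡ 1 (mod d)`. -/
def aOf (d b : ℕ) : ℕ :=
  if h : ∃ a, 1 ≤ a ∧ a ≤ d ∧ (a * btilde d b) % d = 1 % d then h.choose else 1

/-- The representative of `b` modulo `d` lying in `{1,…,d}`. -/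
def repMod (d b : ℕ) : ℕ := if b % d = 0 then d else b % d

/-- The jump abscissa `(⟨e·α⟩ + k)/c − ⌊1 − a·α⌋`. -/
def jumpPt (p : ℤ × ℤ) (b : ℕ) (a ei : ℤ) (k : ℕ) : ℝ :=
  (cangle (((ei : ℚ) * ratOf p : ℚ) : ℝ) + (k : ℝ)) / (cOf p b : ℝ)
    - ((⌊1 - (a : ℚ) * ratOf p⌋ : ℤ) : ℝ)

/-- Number of pairs `(i,k)` with jump abscissa `⪯ x` coming from one pair `p`. -/
def XiCount (p : ℤ × ℤ) (b : ℕ) (a ei : ℤ) (x : ℝ) : ℕ :=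
  if inV p b then ((Finset.range (cOf p b)).filter fun k => cle (jumpPt p b a ei k) x).card else 0

/-- The generalized Christol step function `Ξ_{𝐫,𝐭}(b, ·)`, relative to choices `e`, `f`. -/
def Xi {v w : ℕ} (rr : Fin v → ℤ × ℤ) (tt : Fin w → ℤ × ℤ) (b : ℕ)
    (e : Fin v → ℤ) (f : Fin w → ℤ) (x : ℝ) : ℤ :=
  (∑ i, (XiCount (rr i) b ((aOf (dRT rr tt) b : ℕ) : ℤ) (e i) x : ℤ))
    - (∑ j, (XiCount (tt j) b ((aOf (dRT rr tt) b : ℕ) : ℤ) (f j) x : ℤ))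

/-- `ei` is an admissible choice for the pair `p` and `b`: positive with `b·ei ≡ c (mod s)`. -/
def goodChoice (p : ℤ × ℤ) (b : ℕ) (ei : ℤ) : Prop :=
  inV p b → 0 < ei ∧ p.2 ∣ ((b : ℤ) * ei - (cOf p b : ℤ))

end

/-!
When `b` is coprime to `d_{𝐫,𝐭}`, each `s_i` is coprime to `b`, so `c_i = 1`, every index lies in
`V_b`, and `b̃ = b`, whence `a` is the inverse of `b` modulo `d_{𝐫,𝐭}`. From
`b e_i ≡ 1 ≡ b a (mod s_i)` we get `e_i ≡ a (mod s_i)`, so `e_i α_i` and `a α_i` differ by an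
integer and `⟨e_i α_i⟩ = ⟨a α_i⟩`. The single jump abscissa of index `i` is therefore
`⟨a α_i⟩ − ⌊1 − a α_i⌋`, which equals `a α_i` because `⟨y⟩ − ⌊1 − y⌋ = y` for every real `y`.
The same holds for the `β_j`.
-/

lemma cangle_add_intCast (x : ℝ) (m : ℤ) : cangle (x + m) = cangle x := by
  have hint : (∃ k : ℤ, x + m = k) ↔ ∃ k : ℤ, x = k :=
    ⟨fun ⟨k, hk⟩ => ⟨k - m, by push_cast; linarith⟩, fun ⟨k, hk⟩ => ⟨k + m, by push_cast; linarith⟩⟩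
  simp only [cangle, hint, Int.fract_add_intCast]

lemma cangle_sub_floor_one_sub (x : ℝ) : cangle x - ⌊1 - x⌋ = x := by
  by_cases hx : ∃ m : ℤ, x = m
  · obtain ⟨m, rfl⟩ := hx
    rw [cangle, if_pos ⟨m, rfl⟩, show (1 : ℝ) - m = ((1 - m : ℤ) : ℝ) by push_cast; ring,
      Int.floor_intCast]
    push_cast; ring
  · have hfract_pos : 0 < Int.fract x := Int.fract_pos.mpr fun h => hx ⟨⌊x⌋, h⟩
    have hfloor : ⌊1 - x⌋ = -⌊x⌋ := by
      have hsplit := Int.floor_add_fract x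
      rw [Int.floor_eq_iff]
      push_cast
      constructor <;> linarith [Int.fract_lt_one x]
    rw [cangle, if_neg hx, hfloor, ← Int.self_sub_floor x]
    push_cast; ring

lemma natAbs_snd_dvd_dRT_left {v w : ℕ} (rr : Fin v → ℤ × ℤ) (tt : Fin w → ℤ × ℤ) (i : Fin v) :
    (rr i).2.natAbs ∣ dRT rr tt :=
  (Finset.dvd_lcm (f := fun i => (rr i).2.natAbs) (Finset.mem_univ i)).trans
    (Nat.dvd_lcm_left _ _)

lemma natAbs_snd_dvd_dRT_right {v w : ℕ} (rr : Fin v → ℤ × ℤ) (tt : Fin w → ℤ × ℤ) (j : Fin w) :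
    (tt j).2.natAbs ∣ dRT rr tt :=
  (Finset.dvd_lcm (f := fun j => (tt j).2.natAbs) (Finset.mem_univ j)).trans
    (Nat.dvd_lcm_right _ _)

lemma btilde_eq_self {d b : ℕ} (hcop : Nat.Coprime b d) : btilde d b = b :=
  le_antisymm (Nat.findGreatest_le b) (Nat.le_findGreatest le_rfl ⟨dvd_rfl, hcop⟩)

lemma aOf_eq {d b a : ℕ} (hcop : Nat.Coprime b d) (ha1 : 1 ≤ a) (had : a ≤ d)
    (hab : a * b ≡ 1 [MOD d]) : aOf d b = a := by
  have hex : ∃ c, 1 ≤ c ∧ c ≤ d ∧ (c * btilde d b) % d = 1 % d :=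
    ⟨a, ha1, had, by rw [btilde_eq_self hcop]; exact hab⟩
  rw [aOf, dif_pos hex]
  obtain ⟨hc1, hcd, hcb⟩ := hex.choose_spec
  generalize hex.choose = c at *
  rw [btilde_eq_self hcop] at hcb
  have hca : c ≡ a [MOD d] := Nat.ModEq.cancel_right_of_coprime hcop.symm (hcb.trans hab.symm)
  have hpred : c - 1 ≡ a - 1 [MOD d] :=
    Nat.ModEq.add_right_cancel' 1 (by rwa [Nat.sub_add_cancel hc1, Nat.sub_add_cancel ha1])
  have := hpred.eq_of_lt_of_lt (by omega) (by omega)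
  omega

section OnePair

variable {p : ℤ × ℤ} {b : ℕ}

lemma cOf_eq_one (hsb : Nat.Coprime p.2.natAbs b) : cOf p b = 1 :=
  Nat.dvd_one.mp <| hsb ▸ Nat.dvd_gcd ((Nat.gcd_dvd_left _ _).trans (Nat.gcd_dvd_right _ _))
    (Nat.gcd_dvd_right _ _)

lemma inV_of_coprime (hsb : Nat.Coprime p.2.natAbs b) : inV p b := by
  rw [inV, cOf_eq_one hsb, hsb]

lemma snd_dvd_sub_of_goodChoice {a e : ℤ} (hsb : Nat.Coprime p.2.natAbs b)
    (hab : p.2 ∣ a * b - 1) (he : goodChoice p b e) : p.2 ∣ e - a := by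
  obtain ⟨-, hbe⟩ := he (inV_of_coprime hsb)
  rw [cOf_eq_one hsb, Nat.cast_one] at hbe
  have hmul : p.2 ∣ b * (e - a) := by
    rw [show (b : ℤ) * (e - a) = (b * e - 1) - (a * b - 1) by ring]
    exact dvd_sub hbe hab
  have hcop : IsCoprime p.2 b := Int.isCoprime_iff_gcd_eq_one.mpr (by simpa [Int.gcd] using hsb)
  exact hcop.dvd_of_dvd_mul_left hmul

lemma cangle_mul_ratOf_of_dvd {a e : ℤ} (hea : p.2 ∣ e - a) :
    cangle ((e * ratOf p : ℚ) : ℝ) = cangle ((a * ratOf p : ℚ) : ℝ) := by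
  rcases eq_or_ne p.2 0 with hp | hp
  · simp [ratOf, hp]
  obtain ⟨t, ht⟩ := hea
  have hshift : (e : ℚ) * ratOf p = a * ratOf p + (t * p.1 : ℤ) := by
    rw [eq_add_of_sub_eq ht, ratOf]
    field_simp
    push_cast; ring
  rw [hshift, Rat.cast_add, Rat.cast_intCast, cangle_add_intCast]

lemma jumpPt_zero {a e : ℤ} (hc : cOf p b = 1)
    (he : cangle ((e * ratOf p : ℚ) : ℝ) = cangle ((a * ratOf p : ℚ) : ℝ)) :
    jumpPt p b a e 0 = a * ratOf p := by
  have hfloor : ((⌊1 - a * ratOf p⌋ : ℤ) : ℝ) = ⌊1 - ((a * ratOf p : ℚ) : ℝ)⌋ := by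
    rw [← Rat.floor_cast (α := ℝ)]; push_cast; rfl
  rw [jumpPt, hc, he, hfloor, Nat.cast_zero, Nat.cast_one, add_zero, div_one,
    cangle_sub_floor_one_sub]
  push_cast; rfl

lemma XiCount_eq_ite {d a : ℕ} {e : ℤ} (hsd : p.2.natAbs ∣ d) (hcop : Nat.Coprime b d)
    (hab : a * b ≡ 1 [MOD d]) (he : goodChoice p b e) (x : ℝ) :
    XiCount p b a e x = if cle (a * ((ratOf p : ℚ) : ℝ)) x then 1 else 0 := by
  have hsb : Nat.Coprime p.2.natAbs b := Nat.Coprime.coprime_dvd_left hsd hcop.symm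
  have hsab : p.2 ∣ a * b - 1 := by
    simpa using Int.natAbs_dvd.mp (Nat.modEq_iff_dvd.mp (hab.of_dvd hsd).symm)
  have hjump : jumpPt p b a e 0 = a * ((ratOf p : ℚ) : ℝ) := by
    rw [jumpPt_zero (cOf_eq_one hsb)
      (cangle_mul_ratOf_of_dvd (snd_dvd_sub_of_goodChoice hsb hsab he))]
    push_cast; rfl
  rw [XiCount, if_pos (inV_of_coprime hsb), cOf_eq_one hsb, Finset.range_one,
    Finset.filter_singleton, hjump]
  split_ifs <;> rfl

end OnePair

theorem xi_eq_christol_general {v w : ℕ} (rr : Fin v → ℤ × ℤ) (tt : Fin w → ℤ × ℤ)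
    (b : ℕ) (hcop : Nat.Coprime b (dRT rr tt))
    (a : ℕ) (ha1 : 1 ≤ a) (had : a ≤ dRT rr tt)
    (hab : (a * b) % dRT rr tt = 1 % dRT rr tt)
    (e : Fin v → ℤ) (f : Fin w → ℤ)
    (he : ∀ i, goodChoice (rr i) b (e i)) (hf : ∀ j, goodChoice (tt j) b (f j))
    (x : ℝ) :
    Xi rr tt b e f x =
      ((Finset.univ.filter fun i : Fin v =>
          cle ((a : ℝ) * ((ratOf (rr i) : ℚ) : ℝ)) x).card : ℤ) -
        ((Finset.univ.filter fun j : Fin w =>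
          cle ((a : ℝ) * ((ratOf (tt j) : ℚ) : ℝ)) x).card : ℤ) := by
  have hrr (i : Fin v) :=
    XiCount_eq_ite (natAbs_snd_dvd_dRT_left rr tt i) hcop hab (he i) x
  have htt (j : Fin w) :=
    XiCount_eq_ite (natAbs_snd_dvd_dRT_right rr tt j) hcop hab (hf j) x
  simp only [Xi, aOf_eq hcop ha1 had hab, hrr, htt, Nat.cast_ite, Nat.cast_one, Nat.cast_zero,
    Finset.sum_boole]

/-- for `b` coprime to `d_{𝐫,𝐭}`, the generalized Christol function
`Ξ_{𝐫,𝐭}(b, ·)` coincides with the classical Christol step function `ξ_{𝛂,𝛃}(a, ·)`. -/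
theorem xi_eq_christol {v w : ℕ} (rr : Fin v → ℤ × ℤ) (tt : Fin w → ℤ × ℤ)
    (hs : ∀ i, (rr i).2 ≠ 0) (hu : ∀ j, (tt j).2 ≠ 0)
    (hr : ∀ i, ¬ IsNonPosInt (ratOf (rr i))) (ht : ∀ j, ¬ IsNonPosInt (ratOf (tt j)))
    (b : ℕ) (hb1 : 1 ≤ b) (hbd : b ≤ dRT rr tt) (hcop : Nat.Coprime b (dRT rr tt))
    (a : ℕ) (ha1 : 1 ≤ a) (had : a ≤ dRT rr tt)
    (hab : (a * b) % dRT rr tt = 1 % dRT rr tt)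
    (e : Fin v → ℤ) (f : Fin w → ℤ)
    (he : ∀ i, goodChoice (rr i) b (e i)) (hf : ∀ j, goodChoice (tt j) b (f j))
    (x : ℝ) :
    Xi rr tt b e f x =
      ((Finset.univ.filter fun i : Fin v =>
          cle ((a : ℝ) * ((ratOf (rr i) : ℚ) : ℝ)) x).card : ℤ) -
        ((Finset.univ.filter fun j : Fin w =>
          cle ((a : ℝ) * ((ratOf (tt j) : ℚ) : ℝ)) x).card : ℤ) :=
  xi_eq_christol_general rr tt b hcop a ha1 had hab e f he hf x
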